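/- arXiv:math/0512420 — 2 statements merged into one kernel-verified Lean document; each statement's English description precedes it below -/
import Mathlib

section
/- If G is a claw-free graph with maximal degree d, u ∈ V(G), and v₁, v₂ ∈ N(u) are two nonadjacent vertices, then #(Ṅ(u) ∪ (N(v₁) ∩ N(v₂))) ≤ ⌊(3d+2)/2⌋. -/
open SimpleGraph

/-- A claw in `G` on center `u` and leaves `v₁, v₂, v₃`. -/
def SimpleGraph.IsClaw {V : Type*} (G : SimpleGraph V) (u v₁ v₂ v₃ : V) : Prop :=
  v₁ ≠ v₂ ∧ v₁ ≠ v₃ ∧ v₂ ≠ v₃ ∧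
  G.Adj u v₁ ∧ G.Adj u v₂ ∧ G.Adj u v₃ ∧
  ¬G.Adj v₁ v₂ ∧ ¬G.Adj v₁ v₃ ∧ ¬G.Adj v₂ v₃

/-- A graph is claw-free if it has no induced claw. -/
def SimpleGraph.ClawFree {V : Type*} (G : SimpleGraph V) : Prop :=
  ∀ u v₁ v₂ v₃ : V, ¬ G.IsClaw u v₁ v₂ v₃

/-- The closed neighborhood `Ṅ(v) = N(v) ∪ {v}`. -/
def SimpleGraph.closedNbhd {V : Type*} (G : SimpleGraph V) (v : V) : Set V :=
  insert v (G.neighborSet v)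

/-- The set of faces of the independence complex `Ind(G)`. -/
def indepFaces {V : Type*} (G : SimpleGraph V) : Set (Finset V) :=
  {s | ∀ a ∈ s, ∀ b ∈ s, ¬ G.Adj a b}

/-- The geometric realization of an abstract simplicial complex with vertex set `V`. -/
def realization {V : Type*} (K : Set (Finset V)) : Type _ :=
  {f : V → ℝ // (∀ v, 0 ≤ f v) ∧ (∑ᶠ v, f v) = 1 ∧ ∃ s ∈ K, {v | f v ≠ 0} = ↑s}

instance {V : Type*} (K : Set (Finset V)) : TopologicalSpace (realization K) :=
  instTopologicalSpaceSubtype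

/-- A space is `n`-connected (`n : ℤ`) if it is nonempty when `n ≥ -1` and every continuous
map from the `i`-sphere extends to the `(i+1)`-ball for all `0 ≤ i ≤ n`. -/
def IsNConnected (n : ℤ) (X : Type*) [TopologicalSpace X] : Prop :=
  (-1 ≤ n → Nonempty X) ∧
  ∀ i : ℕ, (i : ℤ) ≤ n →
    ∀ f : C(Metric.sphere (0 : EuclideanSpace ℝ (Fin (i + 1))) 1, X),
      ∃ g : C(Metric.closedBall (0 : EuclideanSpace ℝ (Fin (i + 1))) 1, X),
        ∀ x : Metric.sphere (0 : EuclideanSpace ℝ (Fin (i + 1))) 1,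
          g ⟨x.1, Metric.sphere_subset_closedBall x.2⟩ = f x

/-- Relation generating the unreduced suspension: glue `X × {0}` to a south pole and
`X × {1}` to a north pole. -/
def SuspRel (X : Type*) : X × unitInterval ⊕ Bool → X × unitInterval ⊕ Bool → Prop :=
  fun a b => (∃ x, a = Sum.inl (x, 0) ∧ b = Sum.inr false) ∨
    (∃ x, a = Sum.inl (x, 1) ∧ b = Sum.inr true)

/-- The unreduced suspension of a space. -/
def Susp (X : Type*) [TopologicalSpace X] : Type _ := Quot (SuspRel X)

instance (X : Type*) [TopologicalSpace X] : TopologicalSpace (Susp X) :=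
  instTopologicalSpaceQuot

/-- The north pole of a suspension. -/
def Susp.north (X : Type*) [TopologicalSpace X] : Susp X := Quot.mk _ (Sum.inr true)

/-- Relation generating the wedge sum of a family of pointed spaces. -/
def WedgeRel {ι : Type*} (X : ι → Type*) (pt : ∀ i, X i) :
    (Σ i, X i) ⊕ Unit → (Σ i, X i) ⊕ Unit → Prop :=
  fun a b => ∃ i, a = Sum.inl ⟨i, pt i⟩ ∧ b = Sum.inr ()

/-- The wedge sum of a family of pointed spaces. -/
def Wedge {ι : Type*} (X : ι → Type*) [∀ i, TopologicalSpace (X i)] (pt : ∀ i, X i) :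
    Type _ :=
  Quot (WedgeRel X pt)

instance {ι : Type*} (X : ι → Type*) [∀ i, TopologicalSpace (X i)] (pt : ∀ i, X i) :
    TopologicalSpace (Wedge X pt) :=
  instTopologicalSpaceQuot

/-- The graph `L^k_n`: vertices `{1, …, n}`, with `i < j` adjacent iff `j - i < k`. -/
def lineGraphL (n k : ℕ) : SimpleGraph (Fin n) :=
  SimpleGraph.fromRel (fun i j => (i : ℕ) < j ∧ (j : ℕ) - i < k)

/-- The graph `C^k_n`: vertices `{1, …, n}`, with `i < j` adjacent iff `j - i < k` or
`(n + i) - j < k`. -/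
def circGraphC (n k : ℕ) : SimpleGraph (Fin n) :=
  SimpleGraph.fromRel (fun i j => (i : ℕ) < j ∧ ((j : ℕ) - i < k ∨ (n + i) - j < k))

/-- One elementary collapse step: remove a free face `σ` together with the unique face
`τ` properly containing it (with `τ` of one dimension higher). -/
def ElemCollapse {V : Type*} (K L : Set (Finset V)) : Prop :=
  ∃ σ τ : Finset V, σ ∈ K ∧ τ ∈ K ∧ σ ⊂ τ ∧ τ.card = σ.card + 1 ∧
    (∀ ρ ∈ K, σ ⊂ ρ → ρ = τ) ∧ L = K \ {σ, τ}

/-- `K` collapses onto `L` if there is a finite sequence of elementary collapses from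
`K` to `L`. -/
def Collapses {V : Type*} (K L : Set (Finset V)) : Prop :=
  Relation.ReflTransGen ElemCollapse K L

/-!
Let `S` be the set of common neighbours of `v₁, v₂` outside `Ṅ(u)`. Each `vᵢ` is adjacent to `u`,
to every vertex of `S` and to `N(u) ∩ N(vᵢ)`, so `deg vᵢ ≥ 1 + #S + #(N(u) ∩ N(vᵢ))`. Claw-freeness
at `u` puts every neighbour of `u` other than `v₁, v₂` into `N(v₁) ∪ N(v₂)`, so
`deg u ≤ 2 + #(N(u) ∩ N(v₁)) + #(N(u) ∩ N(v₂))`. Adding the bounds for `v₁` and `v₂` gives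
`2 #S + deg u ≤ 2d`, hence `#(Ṅ(u) ∪ S) = deg u + 1 + #S ≤ (3d + 2) / 2`.
-/

namespace SimpleGraph

open Finset

variable {V : Type*} {G : SimpleGraph V}

theorem ClawFree.adj_or_adj (hG : G.ClawFree) {u v₁ v₂ w : V} (h₁ : G.Adj u v₁)
    (h₂ : G.Adj u v₂) (hw : G.Adj u w) (hne : v₁ ≠ v₂) (hnadj : ¬G.Adj v₁ v₂)
    (hw₁ : w ≠ v₁) (hw₂ : w ≠ v₂) : G.Adj v₁ w ∨ G.Adj v₂ w := by
  by_contra! h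
  exact hG u v₁ v₂ w ⟨hne, hw₁.symm, hw₂.symm, h₁, h₂, hw, hnadj, h.1, h.2⟩

variable [Fintype V] [DecidableEq V] [DecidableRel G.Adj]

theorem ClawFree.degree_le_card_inter_add_card_inter_add_two (hG : G.ClawFree) {u v₁ v₂ : V}
    (h₁ : G.Adj u v₁) (h₂ : G.Adj u v₂) (hne : v₁ ≠ v₂) (hnadj : ¬G.Adj v₁ v₂) :
    G.degree u ≤ #(G.neighborFinset u ∩ G.neighborFinset v₁) +
      #(G.neighborFinset u ∩ G.neighborFinset v₂) + 2 := by
  have hsub : G.neighborFinset u ⊆ {v₁, v₂} ∪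
      ((G.neighborFinset u ∩ G.neighborFinset v₁) ∪ (G.neighborFinset u ∩ G.neighborFinset v₂)) := by
    intro w hw
    rw [mem_neighborFinset] at hw
    by_cases hw₁ : w = v₁
    · simp [hw₁]
    by_cases hw₂ : w = v₂
    · simp [hw₂]
    rcases hG.adj_or_adj h₁ h₂ hw hne hnadj hw₁ hw₂ with h | h <;>
      simp [hw, h]
  calc G.degree u = #(G.neighborFinset u) := (G.card_neighborFinset_eq_degree u).symm
    _ ≤ _ := card_le_card hsub
    _ ≤ #({v₁, v₂} : Finset V) + (#(G.neighborFinset u ∩ G.neighborFinset v₁) +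
          #(G.neighborFinset u ∩ G.neighborFinset v₂)) :=
        (card_union_le _ _).trans (Nat.add_le_add_left (card_union_le _ _) _)
    _ ≤ _ := by have := card_le_two (a := v₁) (b := v₂); omega

theorem card_inter_add_card_sdiff_add_one_eq_degree {u v : V} (h : G.Adj u v) :
    #(G.neighborFinset u ∩ G.neighborFinset v) +
      #(G.neighborFinset v \ insert u (G.neighborFinset u)) + 1 = G.degree v := by
  have hu : u ∈ G.neighborFinset v := (G.mem_neighborFinset v u).2 h.symm
  have hu' : u ∉ G.neighborFinset v ∩ G.neighborFinset u := by simp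
  have := card_sdiff_add_card_inter (G.neighborFinset v) (insert u (G.neighborFinset u))
  rw [inter_insert_of_mem hu, card_insert_of_notMem hu', card_neighborFinset_eq_degree,
    inter_comm] at this
  omega

theorem card_insert_neighborFinset_union (u : V) (s : Finset V) :
    #(insert u (G.neighborFinset u) ∪ s) =
      G.degree u + 1 + #(s \ insert u (G.neighborFinset u)) := by
  rw [union_comm, ← card_sdiff_add_card, card_insert_of_notMem (by simp),
    card_neighborFinset_eq_degree]
  omega

end SimpleGraph

open Finset in
/-- If `G` is claw-free with maximal degree `d`, `u ∈ V(G)` and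
`v₁, v₂ ∈ N(u)` are nonadjacent, then `#(Ṅ(u) ∪ (N(v₁) ∩ N(v₂))) ≤ ⌊(3d+2)/2⌋`. -/
theorem card_closedNbhd_union_common_nbhd_le {V : Type*} [Fintype V] [DecidableEq V]
    (G : SimpleGraph V) [DecidableRel G.Adj] (hG : G.ClawFree) (d : ℕ)
    (hd : G.maxDegree = d) (u v₁ v₂ : V)
    (h₁ : v₁ ∈ G.neighborSet u) (h₂ : v₂ ∈ G.neighborSet u)
    (hne : v₁ ≠ v₂) (hnadj : ¬ G.Adj v₁ v₂) :
    ((insert u (G.neighborFinset u)) ∪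
        (G.neighborFinset v₁ ∩ G.neighborFinset v₂)).card ≤ (3 * d + 2) / 2 := by
  rw [mem_neighborSet] at h₁ h₂
  rw [G.card_insert_neighborFinset_union]
  set S := (G.neighborFinset v₁ ∩ G.neighborFinset v₂) \ insert u (G.neighborFinset u)
  have hS₁ : #S ≤ #(G.neighborFinset v₁ \ insert u (G.neighborFinset u)) :=
    card_le_card (sdiff_subset_sdiff inter_subset_left subset_rfl)
  have hS₂ : #S ≤ #(G.neighborFinset v₂ \ insert u (G.neighborFinset u)) :=
    card_le_card (sdiff_subset_sdiff inter_subset_right subset_rfl)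
  have hdeg₁ := G.card_inter_add_card_sdiff_add_one_eq_degree h₁
  have hdeg₂ := G.card_inter_add_card_sdiff_add_one_eq_degree h₂
  have hdeg := hG.degree_le_card_inter_add_card_inter_add_two h₁ h₂ hne hnadj
  have hmax : ∀ v, G.degree v ≤ d := fun v => hd ▸ G.degree_le_maxDegree v
  have hdu := hmax u
  have hdv₁ := hmax v₁
  have hdv₂ := hmax v₂
  omega
end

section
/- For integers n ≥ 1 and k ≥ 2, the complex L^k_n = Ind(L^k_n) satisfies the homotopy equivalence L^k_n ≃ ⋁_{1 ≤ i < min{k,n}} susp(L^k_{n−k−i}), where L^k_m = ∅ for m ≤ 0. -/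
open SimpleGraph

/-!
Number the vertices `0, …, n - 1`. An independent set of `L^k_n` contains at most one vertex
`j` with `1 ≤ j < k`, and then all its other vertices lie in `[k + j, n)`; otherwise it lies in
`{0} ∪ [k, n)`. Hence `𝓛^k_n` is the union of the star of `0`, which is contractible, and of the
cones with apex `j` over copies of `𝓛^k_{n-k-j}`; each cone meets the star exactly in its base,
and two cones meet only inside the star. Collapsing the star turns every cone into a
suspension. A homotopy inverse runs through the `j`-th suspension from the apex `j` via its base
to the vertex `0`; both composites are homotopic to the identity by explicit formulas in
barycentric coordinates.
-/

section Realization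

variable {V : Type*}

namespace realization

@[ext]
theorem ext {K : Set (Finset V)} {f g : realization K} (h : ∀ v, f.1 v = g.1 v) : f = g :=
  Subtype.ext (funext h)

theorem continuous_apply {K : Set (Finset V)} (v : V) :
    Continuous fun f : realization K => f.1 v :=
  (_root_.continuous_apply v).comp continuous_subtype_val

end realization

variable [Fintype V]

/-- Barycentric coordinates of a point of `|Ind G|`. -/
def IsIndepPoint (G : SimpleGraph V) (p : V → ℝ) : Prop :=
  (∀ v, 0 ≤ p v) ∧ ∑ v, p v = 1 ∧ ∀ a b, p a ≠ 0 → p b ≠ 0 → ¬ G.Adj a b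

namespace realization

variable {G : SimpleGraph V}

theorem isIndepPoint (f : realization (indepFaces G)) : IsIndepPoint G f.1 := by
  obtain ⟨h0, h1, s, hs, hsupp⟩ := f.2
  refine ⟨h0, by rwa [finsum_eq_sum_of_fintype] at h1, fun a b ha hb => hs a ?_ b ?_⟩
  · exact (Set.ext_iff.1 hsupp a).1 ha
  · exact (Set.ext_iff.1 hsupp b).1 hb

def mk (p : V → ℝ) (hp : IsIndepPoint G p) : realization (indepFaces G) :=
  ⟨p, hp.1, by rw [finsum_eq_sum_of_fintype]; exact hp.2.1,
    (Set.toFinite {v | p v ≠ 0}).toFinset, fun a ha b hb => hp.2.2 a b (by simpa using ha)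
      (by simpa using hb), by simp⟩

@[simp]
theorem mk_val (p : V → ℝ) (hp : IsIndepPoint G p) : (mk p hp).1 = p := rfl

theorem nonneg (f : realization (indepFaces G)) (v : V) : 0 ≤ f.1 v := f.isIndepPoint.1 v

theorem sum_eq_one (f : realization (indepFaces G)) : ∑ v, f.1 v = 1 := f.isIndepPoint.2.1

theorem not_adj (f : realization (indepFaces G)) {a b : V} (ha : f.1 a ≠ 0) (hb : f.1 b ≠ 0) :
    ¬ G.Adj a b :=
  f.isIndepPoint.2.2 a b ha hb

theorem le_one (f : realization (indepFaces G)) (v : V) : f.1 v ≤ 1 := by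
  simpa [f.sum_eq_one] using Finset.single_le_sum (fun w _ => f.nonneg w) (Finset.mem_univ v)

theorem apply_eq_zero_of_apply_eq_one (f : realization (indepFaces G)) {v w : V}
    (hv : f.1 v = 1) (hw : w ≠ v) : f.1 w = 0 := by
  classical
  have hsum := f.sum_eq_one
  rw [← Finset.add_sum_erase _ _ (Finset.mem_univ v), hv, add_eq_left] at hsum
  exact (Finset.sum_eq_zero_iff_of_nonneg fun u _ => f.nonneg u).1 hsum w (by simp [hw])

theorem continuous_mk {Z : Type*} [TopologicalSpace Z] {p : Z → V → ℝ}
    (hp : ∀ v, Continuous fun z => p z v) (hind : ∀ z, IsIndepPoint G (p z)) :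
    Continuous fun z => mk (p z) (hind z) :=
  (continuous_pi hp).subtype_mk _

def vertex [DecidableEq V] (v : V) : realization (indepFaces G) :=
  mk (Pi.single v 1) ⟨fun w => by by_cases h : w = v <;> simp [h], by simp, fun a b ha hb => by
    obtain rfl : a = v := by by_contra h; simp [h] at ha
    obtain rfl : b = a := by by_contra h; simp [h] at hb
    exact G.irrefl⟩

@[simp]
theorem vertex_val [DecidableEq V] (v : V) :
    (vertex v : realization (indepFaces G)).1 = Pi.single v 1 := rfl

theorem isClosed_setOf_indepPoint : IsClosed {p : V → ℝ | IsIndepPoint G p} := by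
  have : {p : V → ℝ | IsIndepPoint G p} = (⋂ v, {p | 0 ≤ p v}) ∩ {p | ∑ v, p v = 1} ∩
      ⋂ (a) (b) (_ : G.Adj a b), {p | p a = 0} ∪ {p | p b = 0} := by
    ext p
    simp only [IsIndepPoint, Set.mem_inter_iff, Set.mem_iInter, Set.mem_union]
    refine ⟨fun ⟨h0, h1, h2⟩ => ⟨⟨h0, h1⟩, fun a b hab => ?_⟩,
      fun ⟨⟨h0, h1⟩, h2⟩ => ⟨h0, h1, fun a b ha hb hab => (h2 a b hab).elim ha hb⟩⟩
    by_contra! h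
    exact h2 a b h.1 h.2 hab
  rw [this]
  refine .inter (.inter (isClosed_iInter fun v => isClosed_le continuous_const
    (_root_.continuous_apply v)) (isClosed_eq (by fun_prop) continuous_const))
    (isClosed_iInter fun a => isClosed_iInter fun b => isClosed_iInter fun _ =>
      .union (isClosed_eq (_root_.continuous_apply a) continuous_const)
        (isClosed_eq (_root_.continuous_apply b) continuous_const))

instance : CompactSpace (realization (indepFaces G)) := by
  have hK : IsCompact {p : V → ℝ | IsIndepPoint G p} := by
    refine (isCompact_univ_pi fun _ => isCompact_Icc (a := (0 : ℝ)) (b := 1)).of_isClosed_subset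
      isClosed_setOf_indepPoint fun p hp v _ => ⟨hp.1 v, ?_⟩
    exact hp.2.1 ▸ Finset.single_le_sum (fun w _ => hp.1 w) (Finset.mem_univ v)
  have : {p : V → ℝ | IsIndepPoint G p} =
      Subtype.val '' (Set.univ : Set (realization (indepFaces G))) := by
    ext p
    exact ⟨fun hp => ⟨mk p hp, trivial, rfl⟩, fun ⟨f, _, hf⟩ => hf ▸ isIndepPoint f⟩
  rw [this] at hK
  exact ⟨Topology.IsEmbedding.subtypeVal.isCompact_iff.2 hK⟩

end realization

end Realization

open unitInterval

namespace Susp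

variable {X Z : Type*} [TopologicalSpace X]

def mk (x : X) (s : I) : Susp X := Quot.mk _ (Sum.inl (x, s))

def south (X : Type*) [TopologicalSpace X] : Susp X := Quot.mk _ (Sum.inr false)

theorem mk_zero (x : X) : mk x 0 = south X := Quot.sound (Or.inl ⟨x, rfl, rfl⟩)

theorem mk_one (x : X) : mk x 1 = north X := Quot.sound (Or.inr ⟨x, rfl, rfl⟩)

theorem continuous_mk : Continuous fun p : X × I => mk p.1 p.2 :=
  continuous_quot_mk.comp continuous_inl

theorem ind {P : Susp X → Prop} (hs : P (south X)) (hn : P (north X))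
    (hmk : ∀ x s, P (mk x s)) (z : Susp X) : P z := by
  induction z using Quot.ind with
  | mk p => rcases p with ⟨x, s⟩ | (_ | _); exacts [hmk x s, hs, hn]

def lift (g : X × I → Z) (zs zn : Z) (hs : ∀ x, g (x, 0) = zs) (hn : ∀ x, g (x, 1) = zn) :
    Susp X → Z :=
  Quot.lift (Sum.elim g fun b => cond b zn zs) <| by
    rintro _ _ (⟨x, rfl, rfl⟩ | ⟨x, rfl, rfl⟩)
    exacts [hs x, hn x]

theorem continuous_lift [TopologicalSpace Z] {g : X × I → Z} {zs zn : Z}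
    {hs : ∀ x, g (x, 0) = zs} {hn : ∀ x, g (x, 1) = zn} (hg : Continuous g) :
    Continuous (lift g zs zn hs hn) :=
  continuous_quot_lift _ (hg.sumElim continuous_of_discreteTopology)

/-- Local compactness of `T` makes `T × -` preserve the quotient map onto `Susp X`. -/
theorem continuous_of_prod [TopologicalSpace Z] {T : Type*} [TopologicalSpace T]
    [LocallyCompactSpace T] {F : T × Susp X → Z}
    (hmk : Continuous fun p : T × (X × I) => F (p.1, mk p.2.1 p.2.2))
    (hs : Continuous fun t => F (t, south X)) (hn : Continuous fun t => F (t, north X)) :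
    Continuous F := by
  refine isQuotientMap_quot_mk.continuous_lift_prod_right ?_
  have : Continuous fun p : T × (X × I) ⊕ T × Bool =>
      Sum.elim (fun q : T × (X × I) => F (q.1, mk q.2.1 q.2.2))
        (fun q : T × Bool => F (q.1, Quot.mk _ (Sum.inr q.2))) p := by
    refine hmk.sumElim (continuous_prod_of_discrete_right.2 fun b => ?_)
    cases b
    exacts [hs, hn]
  convert this.comp (Homeomorph.prodSumDistrib (X := T)).continuous with ⟨t, ⟨x, s⟩ | b⟩ <;>
    rfl

/-- At points of height `0` this is the tube lemma for the compact space `X`. -/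
theorem continuous_dite_mk [CompactSpace X] [TopologicalSpace Z] {s : Z → I} (hs : Continuous s)
    (x : ∀ z, s z ≠ 0 → X) (hx : Continuous fun z : {z // s z ≠ 0} => x z z.2) :
    Continuous fun z => if h : s z = 0 then south X else mk (x z h) (s z) := by
  refine continuous_iff_continuousAt.2 fun z₀ => ?_
  by_cases h₀ : s z₀ = 0
  · intro O hO'
    have hO : O ∈ nhds (south X) := by simpa [h₀] using hO'
    have hsouth : ∀ y : X, ∀ᶠ p : I × X in nhds (0, y), mk p.2 p.1 ∈ O := fun y =>
      (continuous_mk.comp continuous_swap).continuousAt.preimage_mem_nhds (by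
        simpa [mk_zero] using hO)
    have htube := isCompact_univ.eventually_forall_of_forall_eventually (x₀ := (0 : I))
      (P := fun s y => mk y s ∈ O) fun y _ => hsouth y
    rw [← h₀] at htube
    rw [Filter.mem_map]
    filter_upwards [hs.continuousAt.eventually htube] with z hz
    show dite _ _ _ ∈ O
    split_ifs
    exacts [mem_of_mem_nhds hO, hz _ trivial]
  · have hopen : IsOpen {z | s z ≠ 0} := isOpen_ne_fun hs continuous_const
    refine ContinuousOn.continuousAt ?_ (hopen.mem_nhds h₀)
    rw [continuousOn_iff_continuous_domRestrict]
    exact (continuous_mk.comp (hx.prodMk (hs.comp continuous_subtype_val))).congr fun z =>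
      (dif_neg z.2 : _ = mk (x z z.2) (s z)).symm

end Susp

namespace Wedge

variable {ι Z : Type*} {X : ι → Type*} [∀ i, TopologicalSpace (X i)] {pt : ∀ i, X i}

def incl (i : ι) (x : X i) : Wedge X pt := Quot.mk _ (Sum.inl ⟨i, x⟩)

def base : Wedge X pt := Quot.mk _ (Sum.inr ())

theorem incl_pt (i : ι) : (incl i (pt i) : Wedge X pt) = base := Quot.sound ⟨i, rfl, rfl⟩

theorem continuous_incl (i : ι) : Continuous (incl i : X i → Wedge X pt) :=
  continuous_quot_mk.comp (continuous_inl.comp continuous_sigmaMk)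

theorem ind {P : Wedge X pt → Prop} (hbase : P base) (hincl : ∀ i x, P (incl i x))
    (w : Wedge X pt) : P w := by
  induction w using Quot.ind with
  | mk p => rcases p with ⟨i, x⟩ | ⟨⟩; exacts [hincl i x, hbase]

def lift (g : ∀ i, X i → Z) (z : Z) (hg : ∀ i, g i (pt i) = z) : Wedge X pt → Z :=
  Quot.lift (Sum.elim (fun p => g p.1 p.2) fun _ => z) <| by
    rintro _ _ ⟨i, rfl, rfl⟩
    exact hg i

theorem continuous_lift [TopologicalSpace Z] {g : ∀ i, X i → Z} {z : Z}
    {hg : ∀ i, g i (pt i) = z} (hcont : ∀ i, Continuous (g i)) : Continuous (lift g z hg) :=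
  continuous_quot_lift _ ((continuous_sigma hcont).sumElim continuous_const)

theorem continuous_of_prod [TopologicalSpace Z] {T : Type*} [TopologicalSpace T]
    [LocallyCompactSpace T] {F : T × Wedge X pt → Z}
    (hincl : ∀ i, Continuous fun p : T × X i => F (p.1, incl i p.2))
    (hbase : Continuous fun t => F (t, base)) : Continuous F := by
  refine isQuotientMap_quot_mk.continuous_lift_prod_right ?_
  have hsigma : Continuous fun p : (Σ i, X i) × T => F (p.2, incl p.1.1 p.1.2) := by
    have : Continuous fun q : Σ i, X i × T => F (q.2.2, incl q.1 q.2.1) :=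
      continuous_sigma fun i => (hincl i).comp continuous_swap
    exact this.comp (Homeomorph.sigmaProdDistrib (ι := ι)).continuous
  have : Continuous fun p : T × (Σ i, X i) ⊕ T × Unit =>
      Sum.elim (fun q : T × (Σ i, X i) => F (q.1, incl q.2.1 q.2.2))
        (fun q : T × Unit => F (q.1, base)) p :=
    (hsigma.comp continuous_swap).sumElim (hbase.comp continuous_fst)
  convert this.comp (Homeomorph.prodSumDistrib (X := T)).continuous
    with ⟨t, ⟨i, x⟩ | ⟨⟩⟩ <;> rfl

end Wedge

abbrev lineComplex (n k : ℕ) := realization (indepFaces (lineGraphL n k))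

abbrev Apex (n k : ℕ) := {j : ℕ // 1 ≤ j ∧ j < min k n}

section LineComplex

variable {n k : ℕ}

instance : Fintype (Apex n k) := Fintype.subtype (Finset.Ico 1 (min k n)) fun _ => Finset.mem_Ico

theorem lineGraphL_adj {a b : Fin n} :
    (lineGraphL n k).Adj a b ↔ a ≠ b ∧ (a : ℕ) < b + k ∧ (b : ℕ) < a + k := by
  simp only [lineGraphL, SimpleGraph.fromRel_adj, ne_eq, Fin.ext_iff]
  omega

namespace Apex

def vertex (j : Apex n k) : Fin n := ⟨j.1, lt_of_lt_of_le j.2.2 (min_le_right k n)⟩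

@[simp] theorem val_vertex (j : Apex n k) : (j.vertex : ℕ) = j.1 := rfl

theorem lt_k (j : Apex n k) : j.1 < k := lt_of_lt_of_le j.2.2 (min_le_left k n)

theorem vertex_ne_zero [NeZero n] (j : Apex n k) : j.vertex ≠ 0 := by
  simpa [Fin.ext_iff] using Nat.one_le_iff_ne_zero.1 j.2.1

theorem vertex_injective : Function.Injective (vertex : Apex n k → Fin n) :=
  fun _ _ h => Subtype.ext (congrArg Fin.val h)

end Apex

def tailEmb (j : Apex n k) (a : Fin (n - k - j.1)) : Fin n := ⟨a + (k + j.1), by omega⟩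

@[simp] theorem val_tailEmb (j : Apex n k) (a : Fin (n - k - j.1)) :
    (tailEmb j a : ℕ) = a + (k + j.1) := rfl

theorem tailEmb_ne_vertex (j : Apex n k) (a : Fin (n - k - j.1)) : tailEmb j a ≠ j.vertex := by
  simp [Fin.ext_iff]
  omega

theorem tailEmb_injective (j : Apex n k) : Function.Injective (tailEmb j) := fun a b h => by
  simpa [Fin.ext_iff] using h

theorem lineGraphL_adj_tailEmb (j : Apex n k) {a b : Fin (n - k - j.1)} :
    (lineGraphL n k).Adj (tailEmb j a) (tailEmb j b) ↔ (lineGraphL (n - k - j.1) k).Adj a b := by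
  simp only [lineGraphL_adj, ne_eq, Fin.ext_iff, val_tailEmb]
  omega

def extendTail (j : Apex n k) (x : Fin (n - k - j.1) → ℝ) (v : Fin n) : ℝ :=
  if h : k + j.1 ≤ v then x ⟨v - (k + j.1), by omega⟩ else 0

theorem extendTail_tailEmb (j : Apex n k) (x : Fin (n - k - j.1) → ℝ) (a : Fin (n - k - j.1)) :
    extendTail j x (tailEmb j a) = x a := by
  simp [extendTail]

theorem extendTail_of_lt (j : Apex n k) (x : Fin (n - k - j.1) → ℝ) {v : Fin n}
    (hv : (v : ℕ) < k + j.1) : extendTail j x v = 0 :=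
  dif_neg (by omega)

theorem exists_tailEmb_of_extendTail_ne_zero (j : Apex n k) (x : Fin (n - k - j.1) → ℝ)
    {v : Fin n} (hv : extendTail j x v ≠ 0) : ∃ a, tailEmb j a = v ∧ x a ≠ 0 := by
  by_cases h : k + j.1 ≤ v
  · refine ⟨⟨v - (k + j.1), by omega⟩, Fin.ext (by simp; omega), ?_⟩
    simpa [extendTail, h] using hv
  · exact absurd (extendTail_of_lt j x (by omega)) hv

theorem extendTail_nonneg (j : Apex n k) {x : Fin (n - k - j.1) → ℝ} (hx : ∀ i, 0 ≤ x i)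
    (v : Fin n) : 0 ≤ extendTail j x v := by
  unfold extendTail
  split_ifs
  exacts [hx _, le_rfl]

theorem not_adj_of_extendTail_ne_zero (j : Apex n k) {x : Fin (n - k - j.1) → ℝ}
    (hx : ∀ i i', x i ≠ 0 → x i' ≠ 0 → ¬ (lineGraphL (n - k - j.1) k).Adj i i')
    {v v' : Fin n} (hv : extendTail j x v ≠ 0) (hv' : extendTail j x v' ≠ 0) :
    ¬ (lineGraphL n k).Adj v v' := by
  obtain ⟨i, rfl, hi⟩ := exists_tailEmb_of_extendTail_ne_zero j x hv
  obtain ⟨i', rfl, hi'⟩ := exists_tailEmb_of_extendTail_ne_zero j x hv'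
  exact (lineGraphL_adj_tailEmb j).not.2 (hx i i' hi hi')

theorem extendTail_smul (j : Apex n k) (c : ℝ) (x : Fin (n - k - j.1) → ℝ) :
    extendTail j (c • x) = c • extendTail j x := by
  funext v
  by_cases h : k + j.1 ≤ v <;> simp [extendTail, h]

@[simp]
theorem extendTail_zero (j : Apex n k) : extendTail j 0 = 0 := by
  funext v
  simp [extendTail]

theorem extendTail_comp_tailEmb (j : Apex n k) (g : Fin n → ℝ) (v : Fin n) :
    extendTail j (g ∘ tailEmb j) v = if k + j.1 ≤ v then g v else 0 := by
  unfold extendTail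
  split_ifs
  · exact congrArg g (Fin.ext (by simp; omega))
  · rfl

theorem sum_extendTail (j : Apex n k) (x : Fin (n - k - j.1) → ℝ) :
    ∑ v, extendTail j x v = ∑ a, x a :=
  .symm (Fintype.sum_of_injective _ (tailEmb_injective j) _ _
    (fun v hv => by_contra fun h => hv <| by
      obtain ⟨a, rfl, -⟩ := exists_tailEmb_of_extendTail_ne_zero j x h; exact ⟨a, rfl⟩)
    fun a => (extendTail_tailEmb j x a).symm)

end LineComplex

section Cones

variable {n k : ℕ}

/-- For an apex `j`, `cone j` is the cone with apex `j` over the copy of `𝓛^k_{n-k-j}` on the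
vertices `[k + j, n)`; `cone 0` is the star of the vertex `0`. -/
def cone (w : ℕ) : Set (lineComplex n k) :=
  {f | ∀ v : Fin n, f.1 v ≠ 0 → (v : ℕ) = w ∨ k + w ≤ v}

theorem isClosed_cone (w : ℕ) : IsClosed (cone w : Set (lineComplex n k)) := by
  simp only [cone, Set.ofPred_forall]
  refine isClosed_iInter fun v => ?_
  by_cases h : (v : ℕ) = w ∨ k + w ≤ v
  · simp [h]
  · simpa [h] using isClosed_eq (realization.continuous_apply v) continuous_const

theorem mem_cone_of_apply_ne_zero (f : lineComplex n k) {w : Fin n} (hw : (w : ℕ) < k)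
    (h : f.1 w ≠ 0) : f ∈ cone w := by
  intro v hv
  have hadj := f.not_adj hv h
  rw [lineGraphL_adj, ne_eq, Fin.ext_iff] at hadj
  omega

theorem apply_vertex_eq_zero_of_mem_cone {f : lineComplex n k} {w : ℕ} (hf : f ∈ cone w)
    {j : Apex n k} (hj : j.1 ≠ w) : f.1 j.vertex = 0 := by
  by_contra h
  have := j.lt_k
  rcases hf _ h with h' | h' <;> simp at h' <;> omega

theorem mem_cone_zero (f : lineComplex n k) (h : ∀ j : Apex n k, f.1 j.vertex = 0) :
    f ∈ cone 0 := by
  intro v hv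
  by_contra! hlt
  exact hv (h ⟨v, by omega, lt_min (by omega) v.2⟩)

theorem eq_single_add_extendTail {f : lineComplex n k} {j : Apex n k} (hf : f ∈ cone j.1) :
    f.1 = Pi.single j.vertex (f.1 j.vertex) + extendTail j (f.1 ∘ tailEmb j) := by
  funext v
  have := j.lt_k
  rw [Pi.add_apply, extendTail_comp_tailEmb, Pi.single_apply]
  by_cases hv : v = j.vertex
  · subst hv; simp; omega
  · by_cases h0 : f.1 v = 0
    · simp [hv, h0]
    · rcases hf v h0 with h | h
      · exact absurd (Fin.ext h) hv
      · simp [hv, h]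

theorem sum_comp_tailEmb {f : lineComplex n k} {j : Apex n k} (hf : f ∈ cone j.1) :
    ∑ a, f.1 (tailEmb j a) = 1 - f.1 j.vertex := by
  have := f.sum_eq_one
  rw [eq_single_add_extendTail hf] at this
  simp only [Pi.add_apply, Finset.sum_add_distrib, Fintype.sum_pi_single', sum_extendTail] at this
  simp only [Function.comp_apply] at this
  linarith

theorem not_adj_of_comp_tailEmb (f : lineComplex n k) (j : Apex n k)
    {a b : Fin (n - k - j.1)} (ha : f.1 (tailEmb j a) ≠ 0) (hb : f.1 (tailEmb j b) ≠ 0) :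
    ¬ (lineGraphL (n - k - j.1) k).Adj a b :=
  (lineGraphL_adj_tailEmb j).not.1 (f.not_adj ha hb)

theorem isIndepPoint_of_support {p g : Fin n → ℝ} (w : Fin n) (h0 : ∀ v, 0 ≤ p v)
    (h1 : ∑ v, p v = 1) (hg : ∀ a b, g a ≠ 0 → g b ≠ 0 → ¬ (lineGraphL n k).Adj a b)
    (hp : ∀ v, p v ≠ 0 → v = w ∨ (k + (w : ℕ) ≤ v ∧ g v ≠ 0)) :
    IsIndepPoint (lineGraphL n k) p := by
  refine ⟨h0, h1, fun a b ha hb hab => ?_⟩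
  have hadj := lineGraphL_adj.1 hab
  rcases hp a ha with rfl | ⟨ha', hga⟩ <;> rcases hp b hb with rfl | ⟨hb', hgb⟩
  · exact hadj.1 rfl
  · omega
  · omega
  · exact hg a b hga hgb hab

variable [NeZero n]

def conePoint (j : Apex n k) (a b c : ℝ) (x : Fin (n - k - j.1) → ℝ) : Fin n → ℝ :=
  Pi.single j.vertex a + Pi.single 0 b + c • extendTail j x

theorem conePoint_apply_vertex (j j' : Apex n k) (a b c : ℝ) (x : Fin (n - k - j.1) → ℝ) :
    conePoint j a b c x j'.vertex = if j' = j then a else 0 := by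
  have := j'.lt_k
  simp [conePoint, Pi.single_apply, Apex.vertex_injective.eq_iff, Apex.vertex_ne_zero,
    extendTail_of_lt j x (v := j'.vertex) (by simp; omega)]

theorem conePoint_apply_tailEmb (j : Apex n k) (a b c : ℝ) (x : Fin (n - k - j.1) → ℝ)
    (i : Fin (n - k - j.1)) : conePoint j a b c x (tailEmb j i) = c * x i := by
  have h0 : tailEmb j i ≠ 0 := by simp [Fin.ext_iff]; omega
  simp [conePoint, tailEmb_ne_vertex, h0, extendTail_tailEmb]

theorem conePoint_apply_zero (j : Apex n k) (a b c : ℝ) (x : Fin (n - k - j.1) → ℝ) :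
    conePoint j a b c x 0 = b := by
  simp [conePoint, (Apex.vertex_ne_zero j).symm, extendTail_of_lt j x (v := 0) (by simp; omega)]

theorem sum_conePoint (j : Apex n k) (a b c : ℝ) (x : Fin (n - k - j.1) → ℝ) :
    ∑ v, conePoint j a b c x v = a + b + c * ∑ i, x i := by
  simp [conePoint, Finset.sum_add_distrib, ← Finset.mul_sum, sum_extendTail]

theorem conePoint_mul_smul (j : Apex n k) (a b c s : ℝ) (x : Fin (n - k - j.1) → ℝ) :
    conePoint j a b (s * c) x = conePoint j a b c (s • x) := by
  simp [conePoint, extendTail_smul, smul_smul, mul_comm]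

theorem eq_or_eq_or_extendTail_ne_zero_of_conePoint_ne_zero (j : Apex n k) {a b c : ℝ}
    {x : Fin (n - k - j.1) → ℝ} {v : Fin n} (hv : conePoint j a b c x v ≠ 0) :
    v = j.vertex ∨ v = 0 ∨ (k + j.1 ≤ (v : ℕ) ∧ extendTail j x v ≠ 0) := by
  by_cases hj : v = j.vertex
  · exact .inl hj
  by_cases h0 : v = 0
  · exact .inr (.inl h0)
  have hv' : extendTail j x v ≠ 0 := by
    simp only [conePoint, Pi.add_apply, Pi.smul_apply, smul_eq_mul, Pi.single_apply, hj, h0,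
      if_false, zero_add] at hv
    exact right_ne_zero_of_mul hv
  obtain ⟨i, rfl, -⟩ := exists_tailEmb_of_extendTail_ne_zero j x hv'
  exact .inr (.inr ⟨by simp, hv'⟩)

theorem isIndepPoint_conePoint (j : Apex n k) {a b c : ℝ} {x : Fin (n - k - j.1) → ℝ}
    (ha : 0 ≤ a) (hb : 0 ≤ b) (hc : 0 ≤ c) (hab : a * b = 0) (hx0 : ∀ i, 0 ≤ x i)
    (hx : ∀ i i', x i ≠ 0 → x i' ≠ 0 → ¬ (lineGraphL (n - k - j.1) k).Adj i i')
    (hsum : a + b + c * ∑ i, x i = 1) : IsIndepPoint (lineGraphL n k) (conePoint j a b c x) := by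
  have h0 : ∀ v, 0 ≤ conePoint j a b c x v := fun v => by
    simp only [conePoint, Pi.add_apply, Pi.smul_apply, smul_eq_mul, Pi.single_apply]
    have := extendTail_nonneg j hx0 v
    split_ifs <;> positivity
  have h1 : ∑ v, conePoint j a b c x v = 1 := by rw [sum_conePoint, hsum]
  have hg := fun v v' => not_adj_of_extendTail_ne_zero (v := v) (v' := v') j hx
  rcases mul_eq_zero.1 hab with rfl | rfl
  · refine isIndepPoint_of_support 0 h0 h1 hg fun v hv => ?_
    rcases eq_or_eq_or_extendTail_ne_zero_of_conePoint_ne_zero j hv with rfl | rfl | ⟨hv', hg'⟩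
    · simp [conePoint_apply_vertex] at hv
    · exact .inl rfl
    · exact .inr ⟨by simp; omega, hg'⟩
  · refine isIndepPoint_of_support j.vertex h0 h1 hg fun v hv => ?_
    rcases eq_or_eq_or_extendTail_ne_zero_of_conePoint_ne_zero j hv with rfl | rfl | h
    · exact .inl rfl
    · simp [conePoint_apply_zero] at hv
    · exact .inr (by simpa using h)

end Cones

section Coefficients

/-- At time `u` the apex weight `t` of a cone point becomes `(1 + u) t - u` if this is
nonnegative, and otherwise its negative is put on the vertex `0`; the tail is rescaled by
`tailCoeff u t = (1 - |(1 + u) t - u|) / (1 - t)`, written so as to be continuous at `t = 1`. -/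
def apexCoeff (u t : ℝ) : ℝ := max ((1 + u) * t - u) 0

def baseCoeff (u t : ℝ) : ℝ := max (u - (1 + u) * t) 0

noncomputable def tailCoeff (u t : ℝ) : ℝ :=
  min (1 + u) ((1 - u + (1 + u) * t) / max (1 - t) (1 / 2))

variable {u t : ℝ}

theorem apexCoeff_nonneg : 0 ≤ apexCoeff u t := le_max_right _ _

theorem baseCoeff_nonneg : 0 ≤ baseCoeff u t := le_max_right _ _

theorem tailCoeff_nonneg (hu0 : 0 ≤ u) (hu1 : u ≤ 1) (ht : 0 ≤ t) : 0 ≤ tailCoeff u t :=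
  le_min (by linarith) (div_nonneg (by nlinarith) (by positivity))

theorem apexCoeff_mul_baseCoeff : apexCoeff u t * baseCoeff u t = 0 := by
  rcases le_total u ((1 + u) * t) with h | h
  · rw [baseCoeff, max_eq_right (by linarith), mul_zero]
  · rw [apexCoeff, max_eq_right (by linarith), zero_mul]

theorem tailCoeff_of_le (hu1 : u ≤ 1) (h : u ≤ (1 + u) * t) :
    tailCoeff u t = 1 + u := by
  rw [tailCoeff, min_eq_left]
  rcases le_total t (1 / 2) with ht | ht
  · rw [max_eq_left (by linarith), le_div_iff₀ (by linarith)]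
    nlinarith
  · rw [max_eq_right (by linarith), le_div_iff₀ (by norm_num)]
    nlinarith

theorem apexCoeff_add_baseCoeff_add_tailCoeff (hu0 : 0 ≤ u) (hu1 : u ≤ 1) :
    apexCoeff u t + baseCoeff u t + tailCoeff u t * (1 - t) = 1 := by
  rcases le_total u ((1 + u) * t) with h | h
  · rw [apexCoeff, max_eq_left (by linarith), baseCoeff, max_eq_right (by linarith),
      tailCoeff_of_le hu1 h]
    ring
  · have ht : t ≤ 1 / 2 := by nlinarith
    rw [apexCoeff, max_eq_right (by linarith), baseCoeff, max_eq_left (by linarith), tailCoeff,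
      max_eq_left (by linarith), min_eq_right, div_mul_cancel₀ _ (by linarith)]
    · ring
    · rw [div_le_iff₀ (by linarith)]
      nlinarith

theorem apexCoeff_zero_left (ht : 0 ≤ t) : apexCoeff 0 t = t := by
  simp [apexCoeff, ht]

theorem baseCoeff_zero_left (ht : 0 ≤ t) : baseCoeff 0 t = 0 := by
  simp [baseCoeff, ht]

theorem tailCoeff_zero_left (ht0 : 0 ≤ t) : tailCoeff 0 t = 1 := by
  simpa using tailCoeff_of_le zero_le_one (by simpa using ht0)

theorem apexCoeff_zero_right (hu : 0 ≤ u) : apexCoeff u 0 = 0 := by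
  simp [apexCoeff, hu]

theorem baseCoeff_zero_right (hu : 0 ≤ u) : baseCoeff u 0 = u := by
  simp [baseCoeff, hu]

theorem tailCoeff_zero_right (hu0 : 0 ≤ u) (hu1 : u ≤ 1) : tailCoeff u 0 = 1 - u := by
  have := apexCoeff_add_baseCoeff_add_tailCoeff (t := 0) hu0 hu1
  rw [apexCoeff_zero_right hu0, baseCoeff_zero_right hu0] at this
  linarith

theorem continuous_apexCoeff : Continuous fun p : ℝ × ℝ => apexCoeff p.1 p.2 := by
  unfold apexCoeff; fun_prop

theorem continuous_baseCoeff : Continuous fun p : ℝ × ℝ => baseCoeff p.1 p.2 := by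
  unfold baseCoeff; fun_prop

theorem continuous_tailCoeff : Continuous fun p : ℝ × ℝ => tailCoeff p.1 p.2 :=
  (continuous_const.add continuous_fst).min <|
    (by fun_prop : Continuous fun p : ℝ × ℝ => 1 - p.1 + (1 + p.1) * p.2).div (by fun_prop)
      fun p => (lt_of_lt_of_le (by norm_num) (le_max_right _ _)).ne'

end Coefficients

abbrev wedgeSusp (n k : ℕ) :=
  Wedge (fun j : Apex n k => Susp (lineComplex (n - k - j.1) k)) fun _ => Susp.north _

section Collapse

variable {n k : ℕ}

def coneParam (j : Apex n k) (f : lineComplex n k) : I :=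
  ⟨1 - f.1 j.vertex, by linarith [f.le_one j.vertex], by linarith [f.nonneg j.vertex]⟩

@[simp] theorem coe_coneParam (j : Apex n k) (f : lineComplex n k) :
    (coneParam j f : ℝ) = 1 - f.1 j.vertex := rfl

theorem coneParam_eq_zero_iff {j : Apex n k} {f : lineComplex n k} :
    coneParam j f = 0 ↔ f.1 j.vertex = 1 := by
  rw [← Subtype.coe_inj, coe_coneParam, Set.Icc.coe_zero, sub_eq_zero, eq_comm]

/-- The projection of `cone j` minus its apex onto the base `𝓛^k_{n-k-j}`. -/
noncomputable def coneProj {j : Apex n k} (f : lineComplex n k) (hf : f ∈ cone j.1)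
    (ht : f.1 j.vertex ≠ 1) : lineComplex (n - k - j.1) k :=
  realization.mk ((1 - f.1 j.vertex)⁻¹ • (f.1 ∘ tailEmb j)) <| by
    have hpos : 0 < 1 - f.1 j.vertex := sub_pos.2 (lt_of_le_of_ne (f.le_one _) ht)
    refine ⟨fun a => mul_nonneg (inv_nonneg.2 hpos.le) (f.nonneg _), ?_, fun a b ha hb => ?_⟩
    · simp [← Finset.mul_sum, sum_comp_tailEmb hf, hpos.ne']
    · exact not_adj_of_comp_tailEmb f j (right_ne_zero_of_mul ha) (right_ne_zero_of_mul hb)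

theorem coneProj_val {j : Apex n k} (f : lineComplex n k) (hf : f ∈ cone j.1)
    (ht : f.1 j.vertex ≠ 1) :
    (coneProj f hf ht).1 = (1 - f.1 j.vertex)⁻¹ • (f.1 ∘ tailEmb j) := rfl

noncomputable def coneCoord (j : Apex n k) (f : (cone j.1 : Set (lineComplex n k))) :
    Susp (lineComplex (n - k - j.1) k) :=
  if h : coneParam j f = 0 then Susp.south _
  else Susp.mk (coneProj f.1 f.2 (mt coneParam_eq_zero_iff.2 h)) (coneParam j f)

theorem coneCoord_of_apply_eq_one {j : Apex n k} {f : (cone j.1 : Set (lineComplex n k))}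
    (ht : f.1.1 j.vertex = 1) : coneCoord j f = Susp.south _ :=
  dif_pos (coneParam_eq_zero_iff.2 ht)

theorem coneCoord_of_apply_ne_one {j : Apex n k} {f : (cone j.1 : Set (lineComplex n k))}
    (ht : f.1.1 j.vertex ≠ 1) : coneCoord j f = Susp.mk (coneProj f.1 f.2 ht) (coneParam j f) :=
  dif_neg (mt coneParam_eq_zero_iff.1 ht)

theorem coneCoord_of_apply_eq_zero {j : Apex n k} {f : (cone j.1 : Set (lineComplex n k))}
    (ht : f.1.1 j.vertex = 0) : coneCoord j f = Susp.north _ := by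
  rw [coneCoord_of_apply_ne_one (by simp [ht]), ← Susp.mk_one (coneProj f.1 f.2 (by simp [ht]))]
  congr 1
  exact Subtype.ext (by simp [ht])

theorem continuous_coneCoord (j : Apex n k) : Continuous (coneCoord j) := by
  have hparam : Continuous fun f : (cone j.1 : Set (lineComplex n k)) => coneParam j f.1 :=
    (continuous_const.sub (realization.continuous_apply _)).comp continuous_subtype_val
      |>.subtype_mk _
  refine Susp.continuous_dite_mk hparam _ (realization.continuous_mk (fun a => ?_) _)
  have hval : Continuous
      fun f : {f : (cone j.1 : Set (lineComplex n k)) // coneParam j f.1 ≠ 0} => f.1.1 :=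
    continuous_subtype_val.comp continuous_subtype_val
  refine .mul (.inv₀ (continuous_const.sub ((realization.continuous_apply _).comp hval))
    fun f => sub_ne_zero.2 (Ne.symm (mt coneParam_eq_zero_iff.2 f.2)))
    ((realization.continuous_apply _).comp hval)

/-- The collapse of `cone 0` to the base point of the wedge. -/
noncomputable def toWedge (f : lineComplex n k) : wedgeSusp n k :=
  if h : ∃ j : Apex n k, f.1 j.vertex ≠ 0 then
    Wedge.incl h.choose
      (coneCoord h.choose ⟨f, mem_cone_of_apply_ne_zero f h.choose.lt_k h.choose_spec⟩)
  else Wedge.base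

theorem toWedge_of_forall {f : lineComplex n k} (h : ∀ j : Apex n k, f.1 j.vertex = 0) :
    toWedge f = Wedge.base :=
  dif_neg (by simpa using h)

theorem toWedge_of_mem_cone {f : lineComplex n k} {j : Apex n k} (hf : f ∈ cone j.1) :
    toWedge f = Wedge.incl j (coneCoord j ⟨f, hf⟩) := by
  by_cases ht : f.1 j.vertex = 0
  · have h : ∀ j' : Apex n k, f.1 j'.vertex = 0 := fun j' => by
      by_cases hj : j' = j
      · rwa [hj]
      · exact apply_vertex_eq_zero_of_mem_cone hf (mt Subtype.ext hj)
    rw [toWedge_of_forall h, coneCoord_of_apply_eq_zero ht, Wedge.incl_pt]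
  · have h : ∃ j : Apex n k, f.1 j.vertex ≠ 0 := ⟨j, ht⟩
    have hj : h.choose = j := by
      by_contra hj
      exact h.choose_spec (apply_vertex_eq_zero_of_mem_cone hf (mt Subtype.ext hj))
    rw [toWedge, dif_pos h]
    subst hj
    rfl

theorem continuous_toWedge : Continuous (toWedge : lineComplex n k → wedgeSusp n k) := by
  let C : Option (Apex n k) → Set (lineComplex n k) := fun o => o.elim (cone 0) fun j => cone j.1
  have hcov : ⋃ o, C o = Set.univ := Set.eq_univ_of_forall fun f => by
    by_cases h : ∃ j : Apex n k, f.1 j.vertex ≠ 0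
    · obtain ⟨j, hj⟩ := h
      exact Set.mem_iUnion.2 ⟨some j, mem_cone_of_apply_ne_zero f j.lt_k hj⟩
    · exact Set.mem_iUnion.2 ⟨none, mem_cone_zero f (by simpa using h)⟩
  refine (locallyFinite_of_finite C).continuous hcov
    (fun o => o.rec (isClosed_cone 0) fun j => isClosed_cone j.1) fun o => ?_
  rcases o with _ | j
  · refine continuousOn_const.congr fun f hf => toWedge_of_forall fun j => ?_
    exact apply_vertex_eq_zero_of_mem_cone hf (by have := j.2.1; omega)
  · rw [continuousOn_iff_continuous_domRestrict]
    exact ((Wedge.continuous_incl j).comp (continuous_coneCoord j)).congr fun f =>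
      (toWedge_of_mem_cone f.2).symm

end Collapse

section Inverse

variable {n k : ℕ} [NeZero n]

theorem continuous_conePoint {Z : Type*} [TopologicalSpace Z] (j : Apex n k) {a b c : Z → ℝ}
    {x : Z → Fin (n - k - j.1) → ℝ} (ha : Continuous a) (hb : Continuous b)
    (hc : Continuous c) (hx : ∀ i, Continuous fun z => x z i) (v : Fin n) :
    Continuous fun z => conePoint j (a z) (b z) (c z) (x z) v := by
  simp only [conePoint, Pi.add_apply, Pi.smul_apply, smul_eq_mul, Pi.single_apply, extendTail]
  split_ifs <;> fun_prop

/-- On the summand `j`, the path `s ↦ ofWedgeSummand j (x, s)` runs from the apex `j` (`s = 0`)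
through `x` in the base of `cone j` (`s = 1/2`) to the vertex `0` (`s = 1`). -/
noncomputable def ofWedgeSummand (j : Apex n k) (p : lineComplex (n - k - j.1) k × I) :
    lineComplex n k :=
  realization.mk
    (conePoint j (apexCoeff 1 (1 - p.2)) (baseCoeff 1 (1 - p.2)) (p.2 * tailCoeff 1 (1 - p.2))
      p.1.1)
    (isIndepPoint_conePoint j apexCoeff_nonneg baseCoeff_nonneg
      (mul_nonneg p.2.2.1 (tailCoeff_nonneg zero_le_one le_rfl (by linarith [p.2.2.2])))
      apexCoeff_mul_baseCoeff p.1.nonneg (fun _ _ => p.1.not_adj)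
      (by
        have := apexCoeff_add_baseCoeff_add_tailCoeff (t := 1 - p.2) zero_le_one le_rfl
        rw [sub_sub_cancel] at this
        rw [p.1.sum_eq_one]
        linarith))

theorem continuous_ofWedgeSummand (j : Apex n k) : Continuous (ofWedgeSummand j) := by
  have hs : Continuous fun p : lineComplex (n - k - j.1) k × I => 1 - (p.2 : ℝ) := by fun_prop
  refine realization.continuous_mk (continuous_conePoint j ?_ ?_ ?_ fun i => ?_) _
  · exact continuous_apexCoeff.comp (continuous_const.prodMk hs)
  · exact continuous_baseCoeff.comp (continuous_const.prodMk hs)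
  · exact (continuous_subtype_val.comp continuous_snd).mul
      (continuous_tailCoeff.comp (continuous_const.prodMk hs))
  · exact (realization.continuous_apply i).comp continuous_fst

theorem ofWedgeSummand_zero (j : Apex n k) (x : lineComplex (n - k - j.1) k) :
    ofWedgeSummand j (x, 0) = realization.vertex j.vertex :=
  realization.ext fun v => by
    simp [ofWedgeSummand, conePoint, apexCoeff, baseCoeff]

theorem ofWedgeSummand_one (j : Apex n k) (x : lineComplex (n - k - j.1) k) :
    ofWedgeSummand j (x, 1) = realization.vertex 0 :=
  realization.ext fun v => by
    simp [ofWedgeSummand, conePoint, apexCoeff, baseCoeff, tailCoeff_zero_right zero_le_one le_rfl]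

noncomputable def ofWedge : wedgeSusp n k → lineComplex n k :=
  Wedge.lift (fun j => Susp.lift (ofWedgeSummand j) _ _ (ofWedgeSummand_zero j)
    (ofWedgeSummand_one j)) (realization.vertex 0) fun _ => rfl

theorem continuous_ofWedge : Continuous (ofWedge : wedgeSusp n k → lineComplex n k) :=
  Wedge.continuous_lift fun j => Susp.continuous_lift (continuous_ofWedgeSummand j)

end Inverse

section Deformation

variable {n k : ℕ}

def apexMass (f : lineComplex n k) : ℝ := ∑ j : Apex n k, f.1 j.vertex

theorem apexMass_nonneg (f : lineComplex n k) : 0 ≤ apexMass f :=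
  Finset.sum_nonneg fun _ _ => f.nonneg _

theorem apexMass_of_forall {f : lineComplex n k} (h : ∀ j : Apex n k, f.1 j.vertex = 0) :
    apexMass f = 0 :=
  Finset.sum_eq_zero fun j _ => h j

theorem apexMass_of_mem_cone {f : lineComplex n k} {j : Apex n k} (hf : f ∈ cone j.1) :
    apexMass f = f.1 j.vertex :=
  Finset.sum_eq_single j (fun _ _ hj => apply_vertex_eq_zero_of_mem_cone hf (mt Subtype.ext hj))
    (absurd (Finset.mem_univ j))

theorem exists_vertex_eq {v : Fin n} (h0 : (v : ℕ) ≠ 0) (hk : (v : ℕ) < k) :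
    ∃ j : Apex n k, j.vertex = v :=
  ⟨⟨v, by omega, lt_min hk v.2⟩, rfl⟩

/-- One formula for the whole deformation: on `cone j` it redistributes the weight between the
apex `j`, the vertex `0` and the tail (`deformFun_of_mem_cone`), on `cone 0` it is the straight
line to the vertex `0` (`deformFun_of_forall`). -/
noncomputable def deformFun (u : ℝ) (f : lineComplex n k) (v : Fin n) : ℝ :=
  if (v : ℕ) = 0 then baseCoeff u (apexMass f) + tailCoeff u (apexMass f) * f.1 v
  else if (v : ℕ) < k then apexCoeff u (f.1 v)
  else tailCoeff u (apexMass f) * f.1 v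

variable [NeZero n] {u : ℝ}

theorem deformFun_of_forall (hu0 : 0 ≤ u) (hu1 : u ≤ 1) {f : lineComplex n k}
    (h : ∀ j : Apex n k, f.1 j.vertex = 0) : deformFun u f = Pi.single 0 u + (1 - u) • f.1 := by
  funext v
  simp only [deformFun, apexMass_of_forall h, baseCoeff_zero_right hu0,
    tailCoeff_zero_right hu0 hu1, Pi.add_apply, Pi.smul_apply, smul_eq_mul, Pi.single_apply]
  by_cases h0 : (v : ℕ) = 0
  · simp [h0, Fin.ext_iff]
  · have hv : v ≠ 0 := fun h => h0 (by simp [h])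
    rw [if_neg h0, if_neg hv, zero_add]
    split_ifs with hk
    · obtain ⟨j, rfl⟩ := exists_vertex_eq h0 hk
      rw [h j, apexCoeff_zero_right hu0, mul_zero]
    · rfl

theorem deformFun_of_mem_cone (hu0 : 0 ≤ u) {f : lineComplex n k} {j : Apex n k}
    (hf : f ∈ cone j.1) : deformFun u f = conePoint j (apexCoeff u (f.1 j.vertex))
      (baseCoeff u (f.1 j.vertex)) (tailCoeff u (f.1 j.vertex)) (f.1 ∘ tailEmb j) := by
  funext v
  have hjk := j.lt_k
  have hoff : ∀ w : Fin n, (w : ℕ) ≠ j.1 → (w : ℕ) < k + j.1 → f.1 w = 0 :=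
    fun w hw hlt => by_contra fun h => by rcases hf w h with h' | h' <;> omega
  rw [deformFun, apexMass_of_mem_cone hf]
  by_cases h0 : (v : ℕ) = 0
  · obtain rfl : v = 0 := Fin.ext (by simpa using h0)
    rw [if_pos h0, conePoint_apply_zero, hoff 0 (by have := j.2.1; simp; omega) (by simp; omega),
      mul_zero, add_zero]
  rw [if_neg h0]
  split_ifs with hk
  · obtain ⟨j', rfl⟩ := exists_vertex_eq h0 hk
    rw [conePoint_apply_vertex]
    split_ifs with hj
    · rw [hj]
    · rw [apply_vertex_eq_zero_of_mem_cone hf (mt Subtype.ext hj), apexCoeff_zero_right hu0]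
  · have hvj : v ≠ j.vertex := by simp [Fin.ext_iff]; omega
    have hv0 : v ≠ 0 := fun h => h0 (by simp [h])
    simp only [conePoint, Pi.add_apply, Pi.smul_apply, smul_eq_mul, Pi.single_apply, hvj, hv0,
      if_false, zero_add, extendTail_comp_tailEmb]
    split_ifs with hlt
    · rfl
    · simp [hoff v (by omega) (by omega)]

theorem isIndepPoint_single_zero_add_smul (hu0 : 0 ≤ u) (hu1 : u ≤ 1) {f : lineComplex n k}
    (hf : f ∈ cone 0) : IsIndepPoint (lineGraphL n k) (Pi.single 0 u + (1 - u) • f.1) := by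
  refine isIndepPoint_of_support 0 (fun v => ?_) ?_ (fun _ _ => f.not_adj) fun v hv => ?_
  · have := f.nonneg v
    simp only [Pi.add_apply, Pi.smul_apply, smul_eq_mul, Pi.single_apply]
    split_ifs <;> nlinarith
  · simp only [Finset.sum_add_distrib, Fintype.sum_pi_single', Pi.add_apply, Pi.smul_apply,
      smul_eq_mul, ← Finset.mul_sum, f.sum_eq_one]
    ring
  · by_cases h0 : v = 0
    · exact .inl h0
    · have hfv : f.1 v ≠ 0 := by
        simp only [Pi.add_apply, Pi.smul_apply, smul_eq_mul, Pi.single_apply, h0, if_false,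
          zero_add] at hv
        exact right_ne_zero_of_mul hv
      rcases hf v hfv with h | h
      · exact absurd (Fin.ext (by simpa using h)) h0
      · exact .inr ⟨by simpa using h, hfv⟩

theorem isIndepPoint_deformFun (hu0 : 0 ≤ u) (hu1 : u ≤ 1) (f : lineComplex n k) :
    IsIndepPoint (lineGraphL n k) (deformFun u f) := by
  by_cases h : ∃ j : Apex n k, f.1 j.vertex ≠ 0
  · obtain ⟨j, hj⟩ := h
    have hf := mem_cone_of_apply_ne_zero f j.lt_k hj
    rw [deformFun_of_mem_cone hu0 hf]
    refine isIndepPoint_conePoint j apexCoeff_nonneg baseCoeff_nonneg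
      (tailCoeff_nonneg hu0 hu1 (f.nonneg _)) apexCoeff_mul_baseCoeff (fun _ => f.nonneg _)
      (fun _ _ => not_adj_of_comp_tailEmb f j) ?_
    simp only [Function.comp_apply]
    rw [sum_comp_tailEmb hf]
    exact apexCoeff_add_baseCoeff_add_tailCoeff hu0 hu1
  · push Not at h
    rw [deformFun_of_forall hu0 hu1 h]
    exact isIndepPoint_single_zero_add_smul hu0 hu1 (mem_cone_zero f h)

noncomputable def deform : C(I × lineComplex n k, lineComplex n k) where
  toFun p := realization.mk (deformFun p.1 p.2) (isIndepPoint_deformFun p.1.2.1 p.1.2.2 p.2)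
  continuous_toFun := by
    refine realization.continuous_mk (fun v => ?_) _
    have hu : Continuous fun p : I × lineComplex n k => (p.1 : ℝ) :=
      continuous_subtype_val.comp continuous_fst
    have hf : ∀ w, Continuous fun p : I × lineComplex n k => p.2.1 w :=
      fun w => (realization.continuous_apply w).comp continuous_snd
    have hT : Continuous fun p : I × lineComplex n k => apexMass p.2 :=
      continuous_finsetSum _ fun _ _ => hf _
    unfold deformFun
    split_ifs
    exacts [(continuous_baseCoeff.comp (hu.prodMk hT)).add
      ((continuous_tailCoeff.comp (hu.prodMk hT)).mul (hf v)),
      continuous_apexCoeff.comp (hu.prodMk (hf v)),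
      (continuous_tailCoeff.comp (hu.prodMk hT)).mul (hf v)]

theorem deform_zero (f : lineComplex n k) : deform (0, f) = f :=
  realization.ext fun v => by
    have hT := apexMass_nonneg f
    change deformFun ((0 : I) : ℝ) f v = f.1 v
    rw [Set.Icc.coe_zero, deformFun, baseCoeff_zero_left hT, tailCoeff_zero_left hT,
      apexCoeff_zero_left (f.nonneg v)]
    split_ifs <;> ring

theorem deform_one (f : lineComplex n k) : deform (1, f) = ofWedge (toWedge f) := by
  by_cases h : ∃ j : Apex n k, f.1 j.vertex ≠ 0
  · obtain ⟨j, hj⟩ := h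
    have hf := mem_cone_of_apply_ne_zero f j.lt_k hj
    rw [toWedge_of_mem_cone hf]
    by_cases ht : f.1 j.vertex = 1
    · rw [coneCoord_of_apply_eq_one ht]
      have htail : f.1 ∘ tailEmb j = 0 :=
        funext fun a => f.apply_eq_zero_of_apply_eq_one ht (tailEmb_ne_vertex j a)
      refine realization.ext fun v => ?_
      change deformFun ((1 : I) : ℝ) f v = (Pi.single j.vertex 1 : Fin n → ℝ) v
      rw [Set.Icc.coe_one, deformFun_of_mem_cone zero_le_one hf, ht, htail]
      norm_num [conePoint, apexCoeff, baseCoeff]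
    · rw [coneCoord_of_apply_ne_one ht]
      refine realization.ext fun v => ?_
      change deformFun ((1 : I) : ℝ) f v = conePoint j _ _ _ _ v
      rw [Set.Icc.coe_one, deformFun_of_mem_cone zero_le_one hf, coe_coneParam, sub_sub_cancel,
        conePoint_mul_smul]
      rw [coneProj_val, smul_inv_smul₀ (sub_ne_zero.2 (Ne.symm ht))]
  · push Not at h
    rw [toWedge_of_forall h]
    refine realization.ext fun v => ?_
    change deformFun ((1 : I) : ℝ) f v = (Pi.single 0 1 : Fin n → ℝ) v
    rw [Set.Icc.coe_one, deformFun_of_forall zero_le_one le_rfl h]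
    simp

end Deformation

section Squeeze

/-- `toWedge ∘ ofWedge` acts on suspension coordinates as `s ↦ min (2 s) 1 = squeeze 0 s`. -/
noncomputable def squeeze (u s : I) : I :=
  ⟨(1 - (u : ℝ)) * min (2 * (s : ℝ)) 1 + u * s, by
    simpa using convex_Icc (0 : ℝ) 1
      ⟨le_min (by linarith [s.2.1]) zero_le_one, min_le_right _ _⟩ s.2
      (sub_nonneg.2 u.2.2) u.2.1 (by ring)⟩

theorem coe_squeeze_zero_left (s : I) : (squeeze 0 s : ℝ) = min (2 * (s : ℝ)) 1 := by
  simp [squeeze]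

theorem squeeze_one_left (s : I) : squeeze 1 s = s := Subtype.ext (by simp [squeeze])

theorem squeeze_zero_right (u : I) : squeeze u 0 = 0 := Subtype.ext (by simp [squeeze])

theorem squeeze_one_right (u : I) : squeeze u 1 = 1 := Subtype.ext (by norm_num [squeeze])

theorem continuous_squeeze : Continuous fun p : I × I => squeeze p.1 p.2 :=
  Continuous.subtype_mk (by fun_prop) _

variable {n k : ℕ}

noncomputable def squeezeWedge (u : I) : wedgeSusp n k → wedgeSusp n k :=
  Wedge.lift (fun j => Susp.lift (fun p => Wedge.incl j (Susp.mk p.1 (squeeze u p.2)))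
      (Wedge.incl j (Susp.south _)) Wedge.base
      (fun x => by rw [squeeze_zero_right, Susp.mk_zero])
      (fun x => by rw [squeeze_one_right, Susp.mk_one, Wedge.incl_pt]))
    Wedge.base fun _ => rfl

theorem continuous_squeezeWedge :
    Continuous fun p : I × wedgeSusp n k => squeezeWedge p.1 p.2 :=
  Wedge.continuous_of_prod (fun j => Susp.continuous_of_prod ((Wedge.continuous_incl j).comp
      (Susp.continuous_mk.comp ((continuous_fst.comp continuous_snd).prodMk
        (continuous_squeeze.comp (continuous_fst.prodMk (continuous_snd.comp continuous_snd))))))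
    (continuous_const (y := (Wedge.incl j (Susp.south _) : wedgeSusp n k))) continuous_const)
    continuous_const

theorem squeezeWedge_one (w : wedgeSusp n k) : squeezeWedge 1 w = w := by
  induction w using Wedge.ind with
  | hbase => rfl
  | hincl j z =>
    induction z using Susp.ind with
    | hs => rfl
    | hn => exact (Wedge.incl_pt j).symm
    | hmk x s =>
      change (Wedge.incl j (Susp.mk x (squeeze 1 s)) : wedgeSusp n k) = _
      rw [squeeze_one_left]

variable [NeZero n]

theorem toWedge_vertex_zero : toWedge (realization.vertex 0 : lineComplex n k) = Wedge.base :=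
  toWedge_of_forall fun j => by simp [Apex.vertex_ne_zero]

theorem toWedge_ofWedgeSummand (j : Apex n k) (x : lineComplex (n - k - j.1) k) (s : I) :
    toWedge (ofWedgeSummand j (x, s)) = Wedge.incl j (Susp.mk x (squeeze 0 s)) := by
  have hp : ∀ j' : Apex n k, (ofWedgeSummand j (x, s)).1 j'.vertex =
      if j' = j then max (1 - 2 * (s : ℝ)) 0 else 0 := fun j' => by
    rw [ofWedgeSummand, realization.mk_val, conePoint_apply_vertex, apexCoeff]
    split_ifs <;> ring_nf
  by_cases hs : 2 * (s : ℝ) < 1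
  · have hpj : (ofWedgeSummand j (x, s)).1 j.vertex = 1 - 2 * s := by
      rw [hp, if_pos rfl, max_eq_left (by linarith)]
    have hf := mem_cone_of_apply_ne_zero _ j.lt_k (by rw [hpj]; linarith)
    rw [toWedge_of_mem_cone hf]
    congr 1
    by_cases hs0 : (s : ℝ) = 0
    · rw [coneCoord_of_apply_eq_one (by rw [hpj, hs0]; ring),
        show squeeze 0 s = 0 from Subtype.ext (by simp [coe_squeeze_zero_left, hs0]), Susp.mk_zero]
    · have hsq : squeeze 0 s = coneParam j (ofWedgeSummand j (x, s)) :=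
        Subtype.ext (by rw [coe_squeeze_zero_left, coe_coneParam, hpj, min_eq_left hs.le]; ring)
      rw [coneCoord_of_apply_ne_one (by rw [hpj]; intro h; apply hs0; linarith), hsq]
      congr 1
      refine realization.ext fun i => ?_
      have hc : tailCoeff 1 (1 - s) = 2 := by
        rw [tailCoeff_of_le le_rfl (by linarith)]
        norm_num
      have htail : (ofWedgeSummand j (x, s)).1 (tailEmb j i) = s * tailCoeff 1 (1 - s) * x.1 i :=
        conePoint_apply_tailEmb j _ _ _ _ i
      simp only [coneProj_val, Pi.smul_apply, Function.comp_apply, smul_eq_mul, hpj, htail, hc]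
      field_simp
      ring
  · have h0 : ∀ j' : Apex n k, (ofWedgeSummand j (x, s)).1 j'.vertex = 0 := fun j' => by
      rw [hp, max_eq_right (by linarith), ite_self]
    rw [toWedge_of_forall h0, show squeeze 0 s = 1 from Subtype.ext (by
      rw [coe_squeeze_zero_left, min_eq_right (by linarith)]; rfl), Susp.mk_one, Wedge.incl_pt]

theorem squeezeWedge_zero (w : wedgeSusp n k) : squeezeWedge 0 w = toWedge (ofWedge w) := by
  induction w using Wedge.ind with
  | hbase => exact toWedge_vertex_zero.symm
  | hincl j z =>
    induction z using Susp.ind with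
    | hs =>
      have h : (realization.vertex j.vertex : lineComplex n k).1 j.vertex = 1 := by simp
      have hf := mem_cone_of_apply_ne_zero (realization.vertex j.vertex) (w := j.vertex) j.lt_k
        (by simp)
      exact ((toWedge_of_mem_cone hf).trans (congrArg _ (coneCoord_of_apply_eq_one h))).symm
    | hn => exact toWedge_vertex_zero.symm
    | hmk x s => exact (toWedge_ofWedgeSummand j x s).symm

end Squeeze

section Equivalence

variable {n k : ℕ} [NeZero n]

noncomputable def deformHomotopy :
    ContinuousMap.Homotopy (ContinuousMap.id (lineComplex n k))
      ((⟨ofWedge, continuous_ofWedge⟩ : C(wedgeSusp n k, lineComplex n k)).comp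
        ⟨toWedge, continuous_toWedge⟩) where
  toContinuousMap := deform
  map_zero_left := deform_zero
  map_one_left := deform_one

noncomputable def squeezeHomotopy :
    ContinuousMap.Homotopy
      ((⟨toWedge, continuous_toWedge⟩ : C(lineComplex n k, wedgeSusp n k)).comp
        ⟨ofWedge, continuous_ofWedge⟩) (ContinuousMap.id (wedgeSusp n k)) where
  toFun p := squeezeWedge p.1 p.2
  continuous_toFun := continuous_squeezeWedge
  map_zero_left := squeezeWedge_zero
  map_one_left := squeezeWedge_one

noncomputable def lineComplexHomotopyEquiv :
    ContinuousMap.HomotopyEquiv (lineComplex n k) (wedgeSusp n k) where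
  toFun := ⟨toWedge, continuous_toWedge⟩
  invFun := ⟨ofWedge, continuous_ofWedge⟩
  left_inv := ⟨deformHomotopy.symm⟩
  right_inv := ⟨squeezeHomotopy⟩

end Equivalence

theorem indComplex_lineGraph_wedge_general {n k : ℕ} (hn : 1 ≤ n) :
    Nonempty (ContinuousMap.HomotopyEquiv
      (realization (indepFaces (lineGraphL n k)))
      (Wedge (fun i : {i : ℕ // 1 ≤ i ∧ i < min k n} =>
          Susp (realization (indepFaces (lineGraphL (n - k - i.1) k))))
        (fun i => Susp.north _))) :=
  have : NeZero n := ⟨by omega⟩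
  ⟨lineComplexHomotopyEquiv⟩

/-- For `n ≥ 1`, `k ≥ 2`, the complex `𝓛^k_n = Ind(L^k_n)` is homotopy
equivalent to the wedge over `1 ≤ i < min{k,n}` of `susp(𝓛^k_{n-k-i})`. -/
theorem indComplex_lineGraph_wedge {n k : ℕ} (hn : 1 ≤ n) (hk : 2 ≤ k) :
    Nonempty (ContinuousMap.HomotopyEquiv
      (realization (indepFaces (lineGraphL n k)))
      (Wedge (fun i : {i : ℕ // 1 ≤ i ∧ i < min k n} =>
          Susp (realization (indepFaces (lineGraphL (n - k - i.1) k))))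
        (fun i => Susp.north _))) :=
  indComplex_lineGraph_wedge_general hn
end
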